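/- arXiv:1205.6657 — 5 statements merged into one kernel-verified Lean document; each statement's English description precedes it below -/
import Mathlib

section
/- Let a < b be real numbers and let f : [a,b] → ℝ be four times continuously differentiable on (a,b) with ‖f⁗‖_∞ = sup_{x∈(a,b)} |f⁗(x)| < ∞. Then |(1/3)[(f(a)+f(b))/2 + 2 f((a+b)/2)] − (1/(b−a)) ∫_a^b f(x) dx| ≤ (1/2880) ‖f⁗‖_∞ (b−a)⁴. -/
/-!
With `m = (a + b) / 2`, `h = (b - a) / 2` and `F` a primitive of `f`, consider the Simpson
remainder `E t = F (m + t) - F (m - t) - t / 3 * (f (m - t) + 4 * f m + f (m + t))`. It and its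
first two derivatives vanish at `t = 0`, and `E''' t = -(t / 3) * (f''' (m + t) - f''' (m - t))`,
which is at most `2 M t ^ 2 / 3` in absolute value because `f'''` is `M`-Lipschitz. Integrating
three times gives `|E h| ≤ M h ^ 5 / 90 = M (b - a) ^ 5 / 2880`.
-/

open Set MeasureTheory intervalIntegral
open scoped NNReal

section PowerBound

variable {E : Type*} [NormedAddCommGroup E] [NormedSpace ℝ E] {g g' : ℝ → E} {T C : ℝ} {n : ℕ}

theorem norm_le_of_norm_deriv_le_mul_pow (hg : ContinuousOn g (Icc 0 T))
    (hg' : ∀ t ∈ Ico 0 T, HasDerivWithinAt g (g' t) (Ici t) t) (h0 : g 0 = 0)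
    (bound : ∀ t ∈ Ico 0 T, ‖g' t‖ ≤ C * t ^ n) :
    ∀ t ∈ Icc 0 T, ‖g t‖ ≤ C / (n + 1) * t ^ (n + 1) := by
  refine image_norm_le_of_norm_deriv_right_le_deriv_boundary hg hg' (by simp [h0])
    (fun t => ?_) bound
  refine ((hasDerivAt_pow (n + 1) t).const_mul (C / (n + 1))).congr_deriv ?_
  rw [Nat.add_sub_cancel]
  push_cast
  field_simp

theorem norm_le_of_norm_deriv_le_mul_pow_Ico (hg : ∀ t ∈ Ico 0 T, HasDerivAt g (g' t) t)
    (h0 : g 0 = 0) (bound : ∀ t ∈ Ico 0 T, ‖g' t‖ ≤ C * t ^ n) :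
    ∀ t ∈ Ico 0 T, ‖g t‖ ≤ C / (n + 1) * t ^ (n + 1) := fun t ht =>
  norm_le_of_norm_deriv_le_mul_pow
    (fun s hs => (hg s ⟨hs.1, hs.2.trans_lt ht.2⟩).continuousAt.continuousWithinAt)
    (fun s hs => (hg s ⟨hs.1, hs.2.trans ht.2⟩).hasDerivWithinAt) h0
    (fun s hs => bound s ⟨hs.1, hs.2.trans ht.2⟩) t ⟨ht.1, le_rfl⟩

end PowerBound

theorem ContDiffOn.hasDerivAt_iteratedDerivWithin {𝕜 F : Type*} [NontriviallyNormedField 𝕜]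
    [NormedAddCommGroup F] [NormedSpace 𝕜 F] {f : 𝕜 → F} {s : Set 𝕜} {n : WithTop ℕ∞} {k : ℕ}
    {x : 𝕜} (hf : ContDiffOn 𝕜 n f s) (hs : IsOpen s) (hk : k < n) (hx : x ∈ s) :
    HasDerivAt (iteratedDerivWithin k f s) (iteratedDerivWithin (k + 1) f s x) x := by
  rw [iteratedDerivWithin_succ]
  exact ((hf.differentiableOn_iteratedDerivWithin hk hs.uniqueDiffOn x hx).hasDerivWithinAt
    ).hasDerivAt (hs.mem_nhds hx)

theorem ContinuousOn.hasDerivAt_integral_of_mem_Ioo {E : Type*} [NormedAddCommGroup E]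
    [NormedSpace ℝ E] [CompleteSpace E] {f : ℝ → E} {a b x : ℝ} (hf : ContinuousOn f (Icc a b))
    (hx : x ∈ Ioo a b) : HasDerivAt (fun u => ∫ t in a..u, f t) (f x) x :=
  integral_hasDerivAt_right
    ((hf.mono (Icc_subset_Icc_right hx.2.le)).intervalIntegrable_of_Icc hx.1.le)
    ((hf.mono Ioo_subset_Icc_self).stronglyMeasurableAtFilter isOpen_Ioo x hx)
    (hf.continuousAt (Icc_mem_nhds hx.1 hx.2))

section Simpson

variable {F f f₁ f₂ f₃ : ℝ → ℝ} {m h t : ℝ} {K : ℝ≥0}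

theorem add_mem_Ioo_and_sub_mem_Ioo (ht : t ∈ Ico 0 h) :
    m + t ∈ Ioo (m - h) (m + h) ∧ m - t ∈ Ioo (m - h) (m + h) := by
  obtain ⟨ht₀, hth⟩ := ht
  refine ⟨⟨?_, ?_⟩, ⟨?_, ?_⟩⟩ <;> linarith

theorem hasDerivAt_simpson_remainder
    (hF_add : HasDerivAt F (f (m + t)) (m + t)) (hF_sub : HasDerivAt F (f (m - t)) (m - t))
    (hf_add : HasDerivAt f (f₁ (m + t)) (m + t)) (hf_sub : HasDerivAt f (f₁ (m - t)) (m - t)) :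
    HasDerivAt (fun s => F (m + s) - F (m - s) - s / 3 * (f (m - s) + 4 * f m + f (m + s)))
      (2 / 3 * (f (m + t) + f (m - t)) - 4 / 3 * f m - t / 3 * (f₁ (m + t) - f₁ (m - t))) t := by
  refine (((hF_add.comp_const_add m t).sub (hF_sub.comp_const_sub m t)).sub
    (((hasDerivAt_id t).div_const 3).mul (((hf_sub.comp_const_sub m t).add_const (4 * f m)).add
      (hf_add.comp_const_add m t)))).congr_deriv ?_
  simp only [Pi.add_apply, id]
  ring

theorem hasDerivAt_simpson_remainder_deriv
    (hf_add : HasDerivAt f (f₁ (m + t)) (m + t)) (hf_sub : HasDerivAt f (f₁ (m - t)) (m - t))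
    (hf₁_add : HasDerivAt f₁ (f₂ (m + t)) (m + t)) (hf₁_sub : HasDerivAt f₁ (f₂ (m - t)) (m - t)) :
    HasDerivAt
      (fun s => 2 / 3 * (f (m + s) + f (m - s)) - 4 / 3 * f m - s / 3 * (f₁ (m + s) - f₁ (m - s)))
      (1 / 3 * (f₁ (m + t) - f₁ (m - t)) - t / 3 * (f₂ (m + t) + f₂ (m - t))) t := by
  refine (((((hf_add.comp_const_add m t).add (hf_sub.comp_const_sub m t)).const_mul
    (2 / 3)).sub_const (4 / 3 * f m)).sub (((hasDerivAt_id t).div_const 3).mul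
      ((hf₁_add.comp_const_add m t).sub (hf₁_sub.comp_const_sub m t)))).congr_deriv ?_
  simp only [Pi.sub_apply, id]
  ring

theorem hasDerivAt_simpson_remainder_deriv_two
    (hf₁_add : HasDerivAt f₁ (f₂ (m + t)) (m + t)) (hf₁_sub : HasDerivAt f₁ (f₂ (m - t)) (m - t))
    (hf₂_add : HasDerivAt f₂ (f₃ (m + t)) (m + t)) (hf₂_sub : HasDerivAt f₂ (f₃ (m - t)) (m - t)) :
    HasDerivAt (fun s => 1 / 3 * (f₁ (m + s) - f₁ (m - s)) - s / 3 * (f₂ (m + s) + f₂ (m - s)))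
      (-(t / 3) * (f₃ (m + t) - f₃ (m - t))) t := by
  refine ((((hf₁_add.comp_const_add m t).sub (hf₁_sub.comp_const_sub m t)).const_mul (1 / 3)).sub
    (((hasDerivAt_id t).div_const 3).mul
      ((hf₂_add.comp_const_add m t).add (hf₂_sub.comp_const_sub m t)))).congr_deriv ?_
  simp only [Pi.add_apply, id]
  ring

theorem abs_simpson_remainder_deriv_le
    (hf : ∀ x ∈ Ioo (m - h) (m + h), HasDerivAt f (f₁ x) x)
    (hf₁ : ∀ x ∈ Ioo (m - h) (m + h), HasDerivAt f₁ (f₂ x) x)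
    (hf₂ : ∀ x ∈ Ioo (m - h) (m + h), HasDerivAt f₂ (f₃ x) x)
    (hf₃ : LipschitzOnWith K f₃ (Ioo (m - h) (m + h))) (ht : t ∈ Ico 0 h) :
    |2 / 3 * (f (m + t) + f (m - t)) - 4 / 3 * f m - t / 3 * (f₁ (m + t) - f₁ (m - t))| ≤
      K / 18 * t ^ 4 := by
  have bound₃ : ∀ s ∈ Ico 0 h, ‖-(s / 3) * (f₃ (m + s) - f₃ (m - s))‖ ≤ 2 * K / 3 * s ^ 2 := by
    intro s hs
    obtain ⟨hs_add, hs_sub⟩ := add_mem_Ioo_and_sub_mem_Ioo (m := m) hs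
    have hlip : |f₃ (m + s) - f₃ (m - s)| ≤ K * (2 * s) := by
      have := hf₃.dist_le_mul _ hs_add _ hs_sub
      rwa [Real.dist_eq, Real.dist_eq, show m + s - (m - s) = 2 * s by ring,
        abs_of_nonneg (a := 2 * s) (by linarith [hs.1])] at this
    rw [norm_mul, norm_neg, Real.norm_eq_abs, Real.norm_eq_abs,
      abs_of_nonneg (a := s / 3) (by linarith [hs.1])]
    nlinarith [hs.1]
  have bound₂ := norm_le_of_norm_deriv_le_mul_pow_Ico (n := 2) (fun s hs =>
    have hs' := add_mem_Ioo_and_sub_mem_Ioo (m := m) hs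
    hasDerivAt_simpson_remainder_deriv_two (hf₁ _ hs'.1) (hf₁ _ hs'.2) (hf₂ _ hs'.1)
      (hf₂ _ hs'.2)) (by simp) bound₃
  have bound₁ := norm_le_of_norm_deriv_le_mul_pow_Ico (n := 3) (fun s hs =>
    have hs' := add_mem_Ioo_and_sub_mem_Ioo (m := m) hs
    hasDerivAt_simpson_remainder_deriv (hf _ hs'.1) (hf _ hs'.2) (hf₁ _ hs'.1)
      (hf₁ _ hs'.2)) (by simp only [add_zero, sub_zero, zero_div, zero_mul]; ring) bound₂ t ht
  rw [← Real.norm_eq_abs]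
  refine bound₁.trans_eq ?_
  push_cast
  ring

theorem abs_sub_simpson_le {a b : ℝ} (hab : a ≤ b) (hF : ContinuousOn F (Icc a b))
    (hf : ContinuousOn f (Icc a b)) (hF' : ∀ x ∈ Ioo a b, HasDerivAt F (f x) x)
    (hf' : ∀ x ∈ Ioo a b, HasDerivAt f (f₁ x) x) (hf₁ : ∀ x ∈ Ioo a b, HasDerivAt f₁ (f₂ x) x)
    (hf₂ : ∀ x ∈ Ioo a b, HasDerivAt f₂ (f₃ x) x) (hf₃ : LipschitzOnWith K f₃ (Ioo a b)) :
    |F b - F a - (b - a) / 6 * (f a + 4 * f ((a + b) / 2) + f b)| ≤ K / 2880 * (b - a) ^ 5 := by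
  obtain ⟨m, h, rfl, rfl⟩ : ∃ m h, a = m - h ∧ b = m + h :=
    ⟨(a + b) / 2, (b - a) / 2, by ring, by ring⟩
  have hh : 0 ≤ h := by linarith
  have maps_add : MapsTo (fun t => m + t) (Icc 0 h) (Icc (m - h) (m + h)) :=
    fun t ht => ⟨by linarith [ht.1], by linarith [ht.2]⟩
  have maps_sub : MapsTo (fun t => m - t) (Icc 0 h) (Icc (m - h) (m + h)) :=
    fun t ht => ⟨by linarith [ht.2], by linarith [ht.1]⟩
  have cont : ContinuousOn
      (fun t => F (m + t) - F (m - t) - t / 3 * (f (m - t) + 4 * f m + f (m + t))) (Icc 0 h) := by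
    have := hF.comp (by fun_prop) maps_add
    have := hF.comp (by fun_prop) maps_sub
    have := hf.comp (by fun_prop) maps_add
    have := hf.comp (by fun_prop) maps_sub
    fun_prop
  have := norm_le_of_norm_deriv_le_mul_pow (n := 4) cont (fun t ht =>
    have ht' := add_mem_Ioo_and_sub_mem_Ioo (m := m) ht
    (hasDerivAt_simpson_remainder (hF' _ ht'.1) (hF' _ ht'.2) (hf' _ ht'.1)
      (hf' _ ht'.2)).hasDerivWithinAt) (by simp)
    (fun t ht =>
      (Real.norm_eq_abs _).trans_le (abs_simpson_remainder_deriv_le hf' hf₁ hf₂ hf₃ ht))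
    h ⟨hh, le_rfl⟩
  rw [show (m - h + (m + h)) / 2 = m by ring, show m + h - (m - h) = 2 * h by ring,
    ← Real.norm_eq_abs]
  refine (le_of_eq ?_).trans (this.trans_eq ?_)
  · congr 1
    ring
  · push_cast
    ring

end Simpson

/-- **Classical Simpson inequality.** If `f` is four times continuously
differentiable on `(a, b)` (and continuous on `[a, b]`) with the fourth
derivative bounded in absolute value by `M` on `(a, b)`, then the Simpson
quadrature error against the mean value of `f` is at most
`(1/2880) * M * (b - a)^4`. -/
theorem simpson_inequality (a b : ℝ) (hab : a < b) (f : ℝ → ℝ)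
    (hcont : ContinuousOn f (Set.Icc a b))
    (hf : ContDiffOn ℝ 4 f (Set.Ioo a b))
    (M : ℝ)
    (hM : ∀ x ∈ Set.Ioo a b, |iteratedDerivWithin 4 f (Set.Ioo a b) x| ≤ M) :
    |(1 / 3) * ((f a + f b) / 2 + 2 * f ((a + b) / 2)) -
        (1 / (b - a)) * ∫ x in a..b, f x| ≤
      (1 / 2880) * M * (b - a) ^ 4 := by
  set s := Ioo a b
  have hderiv : ∀ k : ℕ, k < 4 → ∀ x ∈ s,
      HasDerivAt (iteratedDerivWithin k f s) (iteratedDerivWithin (k + 1) f s x) x :=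
    fun k hk x hx => hf.hasDerivAt_iteratedDerivWithin isOpen_Ioo (by exact_mod_cast hk) hx
  have hM₀ : 0 ≤ M :=
    (abs_nonneg _).trans (hM _ ⟨left_lt_add_div_two.2 hab, add_div_two_lt_right.2 hab⟩)
  lift M to ℝ≥0 using hM₀
  have hlip : LipschitzOnWith M (iteratedDerivWithin 3 f s) s :=
    (convex_Ioo a b).lipschitzOnWith_of_nnnorm_hasDerivWithin_le
      (fun x hx => (hderiv 3 (by norm_num) x hx).hasDerivWithinAt)
      (fun x hx => by rw [← NNReal.coe_le_coe, coe_nnnorm]; exact hM x hx)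
  have hprim : ContinuousOn (fun u => ∫ x in a..u, f x) (Icc a b) := by
    simpa [uIcc_of_le hab.le] using
      continuousOn_primitive_interval' (hcont.intervalIntegrable_of_Icc hab.le) left_mem_uIcc
  have key := abs_sub_simpson_le hab.le hprim hcont
    (fun x => hcont.hasDerivAt_integral_of_mem_Ioo)
    (by simpa only [iteratedDerivWithin_zero] using hderiv 0 (by norm_num))
    (hderiv 1 (by norm_num)) (hderiv 2 (by norm_num)) hlip
  rw [integral_same, sub_zero] at key
  have hba : 0 < b - a := sub_pos.2 hab
  rw [show (1 / 3) * ((f a + f b) / 2 + 2 * f ((a + b) / 2)) - (1 / (b - a)) * ∫ x in a..b, f x =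
      -((∫ x in a..b, f x) - (b - a) / 6 * (f a + 4 * f ((a + b) / 2) + f b)) / (b - a) by
    field_simp; ring, abs_div, abs_neg, abs_of_pos hba, div_le_iff₀ hba]
  exact key.trans_eq (by ring)
end

section
/- Let f : I ⊆ ℝ → ℝ be an absolutely continuous mapping on the interior of I, and let a, b ∈ I with a < b. Then (1/6)[f(a) + 4 f((a+b)/2) + f(b)] − (1/(b−a)) ∫_a^b f(x) dx = (b−a) ∫_0^1 p(t) f′(t b + (1−t) a) dt, where p(t) = t − 1/6 for t ∈ [0, 1/2) and p(t) = t − 5/6 for t ∈ [1/2, 1]. -/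
/-!
Integration by parts against an affine factor,
`∫_α^β (x - c) f'(x) dx = (β - c) f(β) - (α - c) f(α) - ∫_α^β f`,
holds for an indefinite integral `f` of an integrable `f'`, since such an `f` is absolutely
continuous with derivative `f'` almost everywhere. In the variable `x = t b + (1 - t) a` the
kernel `p` is affine on each half of `[a, b]`, vanishing at `(5a + b)/6` and at `(a + 5b)/6`;
integrating by parts on both halves, the boundary terms add up to the Simpson weights `1, 4, 1`.
-/

open MeasureTheory Set
open scoped Interval

section IndefiniteIntegral

variable {f f' : ℝ → ℝ} {α β : ℝ}

theorem continuousOn_of_eq_add_integral (hf' : IntervalIntegrable f' volume α β)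
    (hf : ∀ x ∈ [[α, β]], f x = f α + ∫ t in α..x, f' t) : ContinuousOn f [[α, β]] :=
  (continuousOn_const.add (hf'.absolutelyContinuousOnInterval_intervalIntegral
    left_mem_uIcc).continuousOn).congr hf

theorem eq_add_integral_of_mem_uIcc (hf' : IntervalIntegrable f' volume α β)
    (hf : ∀ x ∈ [[α, β]], f x = f α + ∫ t in α..x, f' t) {m x : ℝ} (hm : m ∈ [[α, β]])
    (hx : x ∈ [[α, β]]) : f x = f m + ∫ t in m..x, f' t := by
  rw [hf x hx, hf m hm, add_assoc, intervalIntegral.integral_add_adjacent_intervals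
    (hf'.mono_set (uIcc_subset_uIcc_left hm)) (hf'.mono_set (uIcc_subset_uIcc hm hx))]

theorem integral_sub_mul_eq_of_eq_add_integral (c : ℝ) (hf' : IntervalIntegrable f' volume α β)
    (hf : ∀ x ∈ [[α, β]], f x = f α + ∫ t in α..x, f' t) :
    ∫ x in α..β, (x - c) * f' x = (β - c) * f β - (α - c) * f α - ∫ x in α..β, f x := by
  set F := fun x => ∫ t in α..x, f' t
  have hF : AbsolutelyContinuousOnInterval F α β :=
    hf'.absolutelyContinuousOnInterval_intervalIntegral left_mem_uIcc
  have haffine : AbsolutelyContinuousOnInterval (fun x => x - c) α β :=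
    (contDiff_id.sub contDiff_const).contDiffOn.absolutelyContinuousOnInterval
  have hderiv : ∫ x in α..β, (x - c) * f' x = ∫ x in α..β, (x - c) * deriv F x := by
    apply intervalIntegral.integral_congr_ae
    filter_upwards [hf'.ae_hasDerivAt_integral] with x hx hxI
    rw [(hx (uIoc_subset_uIcc hxI) α left_mem_uIcc).deriv]
  have hintegral : ∫ x in α..β, f x = (β - α) * f α + ∫ x in α..β, F x := by
    rw [intervalIntegral.integral_congr hf, intervalIntegral.integral_add
      intervalIntegrable_const hF.continuousOn.intervalIntegrable,
      intervalIntegral.integral_const, smul_eq_mul]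
  rw [hderiv, haffine.integral_mul_deriv_eq_deriv_mul hF, hintegral, hf β right_mem_uIcc]
  simp only [F, deriv_sub_const, deriv_id'', one_mul, intervalIntegral.integral_same]
  ring

theorem simpson_rule_sub_integral_eq (hf' : IntervalIntegrable f' volume α β)
    (hf : ∀ x ∈ [[α, β]], f x = f α + ∫ t in α..x, f' t) :
    (β - α) / 6 * (f α + 4 * f ((α + β) / 2) + f β) - ∫ x in α..β, f x =
      (∫ x in α..(α + β) / 2, (x - (5 * α + β) / 6) * f' x) +
        ∫ x in (α + β) / 2..β, (x - (α + 5 * β) / 6) * f' x := by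
  have hm : (α + β) / 2 ∈ [[α, β]] :=
    mem_uIcc.2 (by rcases le_total α β with h | h <;> [left; right] <;> constructor <;> linarith)
  have hcont := continuousOn_of_eq_add_integral hf' hf
  rw [integral_sub_mul_eq_of_eq_add_integral _ (hf'.mono_set (uIcc_subset_uIcc_left hm))
      fun x hx => hf x (uIcc_subset_uIcc_left hm hx),
    integral_sub_mul_eq_of_eq_add_integral _ (hf'.mono_set (uIcc_subset_uIcc_right hm))
      fun x hx => eq_add_integral_of_mem_uIcc hf' hf hm (uIcc_subset_uIcc_right hm hx),
    ← intervalIntegral.integral_add_adjacent_intervals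
      (hcont.mono (uIcc_subset_uIcc_left hm)).intervalIntegrable
      (hcont.mono (uIcc_subset_uIcc_right hm)).intervalIntegrable]
  ring

end IndefiniteIntegral

theorem integral_ite_lt_mul_eq_add {u v g : ℝ → ℝ} {α m β : ℝ} (hαm : α ≤ m) (hmβ : m ≤ β)
    (hu : IntervalIntegrable (fun x => u x * g x) volume α m)
    (hv : IntervalIntegrable (fun x => v x * g x) volume m β) :
    ∫ x in α..β, (if x < m then u x else v x) * g x =
      (∫ x in α..m, u x * g x) + ∫ x in m..β, v x * g x := by
  have hleft : EqOn (fun x => (if x < m then u x else v x) * g x) (fun x => u x * g x)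
      (uIoo α m) := by
    intro x hx
    rw [uIoo_of_le hαm] at hx
    simp [hx.2]
  have hright : EqOn (fun x => (if x < m then u x else v x) * g x) (fun x => v x * g x)
      (uIoo m β) := by
    intro x hx
    rw [uIoo_of_le hmβ] at hx
    simp [hx.1.not_gt]
  rw [← intervalIntegral.integral_add_adjacent_intervals (hu.congr_uIoo hleft.symm)
    (hv.congr_uIoo hright.symm), intervalIntegral.integral_congr_uIoo hleft,
    intervalIntegral.integral_congr_uIoo hright]

theorem integral_sub_mul_comp_mul_add (g : ℝ → ℝ) {c : ℝ} (hc : c ≠ 0) (d κ s s' : ℝ) :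
    ∫ t in s..s', (t - κ) * g (c * t + d) =
      (c ^ 2)⁻¹ * ∫ x in c * s + d..c * s' + d, (x - (c * κ + d)) * g x := by
  have h := intervalIntegral.integral_comp_mul_add (a := s) (b := s')
    (fun x => (x - (c * κ + d)) * g x) hc d
  simp only [smul_eq_mul] at h
  calc ∫ t in s..s', (t - κ) * g (c * t + d)
      = c⁻¹ * ∫ t in s..s', (c * t + d - (c * κ + d)) * g (c * t + d) := by
        rw [← intervalIntegral.integral_const_mul]
        congr 1 with t
        field_simp
        ring
    _ = _ := by rw [h, ← mul_assoc, sq, mul_inv]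

theorem simpson_kernel_identity_general (a b : ℝ)
    (hab : a < b)
    (f f' : ℝ → ℝ)
    (hint : IntervalIntegrable f' MeasureTheory.volume a b)
    (hAC : ∀ x ∈ Set.Icc a b, f x = f a + ∫ t in a..x, f' t) :
    (1 / 6) * (f a + 4 * f ((a + b) / 2) + f b) -
        (1 / (b - a)) * ∫ x in a..b, f x =
      (b - a) *
        ∫ t in (0 : ℝ)..1,
          (if t < 1 / 2 then t - 1 / 6 else t - 5 / 6) * f' (t * b + (1 - t) * a) := by
  have hba : b - a ≠ 0 := sub_ne_zero.2 hab.ne'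
  have hg : IntervalIntegrable (fun t => f' ((b - a) * t + a)) volume 0 1 := by
    simpa [hba] using (hint.comp_add_right a).comp_mul_left (c := b - a)
  simp only [show ∀ t : ℝ, t * b + (1 - t) * a = (b - a) * t + a from fun t => by ring]
  rw [integral_ite_lt_mul_eq_add (by norm_num) (by norm_num)
      ((hg.mono_set (uIcc_subset_uIcc_left (by norm_num))).continuousOn_mul (by fun_prop))
      ((hg.mono_set (uIcc_subset_uIcc_right (by norm_num))).continuousOn_mul (by fun_prop)),
    integral_sub_mul_comp_mul_add f' hba, integral_sub_mul_comp_mul_add f' hba,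
    show (b - a) * 0 + a = a by ring, show (b - a) * 1 + a = b by ring,
    show (b - a) * (1 / 2) + a = (a + b) / 2 by ring,
    show (b - a) * (1 / 6) + a = (5 * a + b) / 6 by ring,
    show (b - a) * (5 / 6) + a = (a + 5 * b) / 6 by ring, ← mul_add,
    ← simpson_rule_sub_integral_eq hint (uIcc_of_le hab.le ▸ hAC)]
  field_simp

/-- **Simpson kernel identity (Alomari et al.).** If `f` is absolutely
continuous on the interior of `I` (expressed by saying that `f` is the
indefinite integral of an integrable function `f'` on `[a, b] ⊆ interior I`),
then the Simpson quadrature error equals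
`(b - a) * ∫ t in 0..1, p t * f' (t * b + (1 - t) * a)` where
`p t = t - 1/6` on `[0, 1/2)` and `p t = t - 5/6` on `[1/2, 1]`. -/
theorem simpson_kernel_identity (I : Set ℝ) (a b : ℝ) (ha : a ∈ I) (hb : b ∈ I)
    (hab : a < b) (hIab : Set.Icc a b ⊆ interior I)
    (f f' : ℝ → ℝ)
    (hint : IntervalIntegrable f' MeasureTheory.volume a b)
    (hAC : ∀ x ∈ Set.Icc a b, f x = f a + ∫ t in a..x, f' t) :
    (1 / 6) * (f a + 4 * f ((a + b) / 2) + f b) -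
        (1 / (b - a)) * ∫ x in a..b, f x =
      (b - a) *
        ∫ t in (0 : ℝ)..1,
          (if t < 1 / 2 then t - 1 / 6 else t - 5 / 6) * f' (t * b + (1 - t) * a) :=
  simpson_kernel_identity_general a b hab f f' hint hAC
end

section
/- Let a, b ∈ ℝ and let c > 0 be a real constant (representing e^{iφ} for 0 ≤ φ ≤ π/2) with a < a + c(b−a). Let f be a positive real-valued function differentiable on an open set containing [a, a + c(b−a)] whose derivative f′ is integrable on [a, a + c(b−a)]. Then (1/6)[f(a) + 4 f(a + c(b−a)/2) + f(a + c(b−a))] − (1/(c(b−a))) ∫_a^{a+c(b−a)} f(x) dx = c(b−a) ∫_0^1 p(t) f′(a + t c (b−a)) dt, where p(t) = t − 1/6 for t ∈ [0, 1/2) and p(t) = t − 5/6 for t ∈ [1/2, 1]. -/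
/-!
Write the kernel as `p t = (t - 5/6) + (2/3) · 𝟙[t < 1/2]`. For `v t = f (a + t h)` with
`h = c (b - a)`, one integration by parts against `t - 5/6` on `[0, 1]` together with the
fundamental theorem of calculus on `[0, 1/2]` turns `∫₀¹ p v'` into the Simpson combination
`(v 0 + 4 v (1/2) + v 1) / 6` minus `∫₀¹ v`, and the substitution `x = a + t h` turns `∫₀¹ v`
into the mean value of `f` over `[a, a + h]`.
-/

open intervalIntegral MeasureTheory Set

noncomputable def simpsonKernel (t : ℝ) : ℝ := if t < 1 / 2 then t - 1 / 6 else t - 5 / 6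

theorem intervalIntegral.integral_indicator_Iio {f : ℝ → ℝ} {μ : Measure ℝ}
    [NullSingletonClass μ] {a₁ a₂ a₃ : ℝ} (h : a₂ ∈ Icc a₁ a₃) :
    ∫ x in a₁..a₃, (Iio a₂).indicator f x ∂μ = ∫ x in a₁..a₂, f x ∂μ := by
  rw [← integral_indicator h]
  exact integral_congr_ae ((indicator_ae_eq_of_ae_eq_set Iio_ae_eq_Iic).mono fun _ hx _ => hx)

theorem intervalIntegral.integral_sub_const_mul_deriv {v v' : ℝ → ℝ} {a b : ℝ}
    (hv : ∀ x ∈ uIcc a b, HasDerivAt v (v' x) x) (hv' : IntervalIntegrable v' volume a b)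
    (k : ℝ) :
    ∫ x in a..b, (x - k) * v' x = (b - k) * v b - (a - k) * v a - ∫ x in a..b, v x := by
  simpa using integral_mul_deriv_eq_deriv_mul (fun x _ => (hasDerivAt_id x).sub_const k) hv
    intervalIntegrable_const hv'

theorem integral_simpsonKernel_mul_deriv {v v' : ℝ → ℝ}
    (hv : ∀ t ∈ Icc (0 : ℝ) 1, HasDerivAt v (v' t) t) (hv' : IntervalIntegrable v' volume 0 1) :
    ∫ t in (0 : ℝ)..1, simpsonKernel t * v' t =
      (v 0 + 4 * v (1 / 2) + v 1) / 6 - ∫ t in (0 : ℝ)..1, v t := by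
  have hhalf : (1 / 2 : ℝ) ∈ Icc 0 1 := by norm_num
  have hv01 : ∀ t ∈ uIcc (0 : ℝ) 1, HasDerivAt v (v' t) t := by
    rwa [uIcc_of_le zero_le_one]
  have hv0half : ∀ t ∈ uIcc (0 : ℝ) (1 / 2), HasDerivAt v (v' t) t := fun t ht =>
    hv t (Icc_subset_Icc_right hhalf.2 (by rwa [uIcc_of_le hhalf.1] at ht))
  have hlin : IntervalIntegrable (fun t => (t - 5 / 6) * v' t) volume 0 1 :=
    hv'.continuousOn_mul (by fun_prop)
  have hind : IntervalIntegrable (fun t => 2 / 3 * (Iio (1 / 2 : ℝ)).indicator v' t) volume 0 1 :=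
    IntervalIntegrable.const_mul
      ⟨hv'.1.indicator measurableSet_Iio, hv'.2.indicator measurableSet_Iio⟩ _
  calc ∫ t in (0 : ℝ)..1, simpsonKernel t * v' t
      = ∫ t in (0 : ℝ)..1, ((t - 5 / 6) * v' t + 2 / 3 * (Iio (1 / 2 : ℝ)).indicator v' t) := by
        refine integral_congr fun t _ => ?_
        rcases lt_or_ge t (1 / 2) with ht | ht
        · rw [simpsonKernel, if_pos ht, indicator_of_mem (mem_Iio.2 ht)]; ring
        · rw [simpsonKernel, if_neg ht.not_gt, indicator_of_notMem (notMem_Iio.2 ht)]; ring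
    _ = (1 - 5 / 6) * v 1 - (0 - 5 / 6) * v 0 - (∫ t in (0 : ℝ)..1, v t)
          + 2 / 3 * (v (1 / 2) - v 0) := by
        rw [integral_add hlin hind, integral_sub_const_mul_deriv hv01 hv',
          intervalIntegral.integral_const_mul, integral_indicator_Iio hhalf,
          integral_eq_sub_of_hasDerivAt hv0half]
        exact hv'.mono_set (uIcc_subset_uIcc_left (by rwa [uIcc_of_le zero_le_one]))
    _ = (v 0 + 4 * v (1 / 2) + v 1) / 6 - ∫ t in (0 : ℝ)..1, v t := by ring

theorem IntervalIntegrable.comp_add_mul_unitInterval {g : ℝ → ℝ} {a h : ℝ} (hh : h ≠ 0)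
    (hg : IntervalIntegrable g volume a (a + h)) :
    IntervalIntegrable (fun t => g (a + t * h)) volume 0 1 := by
  simpa [hh, add_comm a] using (hg.comp_add_left a).comp_mul_right (c := h)

theorem simpson_kernel_identity_phi_general (a b c : ℝ)
    (hab : a < a + c * (b - a))
    (U : Set ℝ) (hsub : Set.Icc a (a + c * (b - a)) ⊆ U)
    (f f' : ℝ → ℝ)
    (hderiv : ∀ x ∈ U, HasDerivAt f (f' x) x)
    (hint : IntervalIntegrable f' MeasureTheory.volume a (a + c * (b - a))) :
    (1 / 6) * (f a + 4 * f (a + c * (b - a) / 2) + f (a + c * (b - a))) -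
        (1 / (c * (b - a))) * ∫ x in a..(a + c * (b - a)), f x =
      c * (b - a) *
        ∫ t in (0 : ℝ)..1,
          (if t < 1 / 2 then t - 1 / 6 else t - 5 / 6) * f' (a + t * c * (b - a)) := by
  simp only [mul_assoc _ c (b - a)]
  set h := c * (b - a)
  have hh : 0 < h := by linarith
  have hv : ∀ t ∈ Icc (0 : ℝ) 1,
      HasDerivAt (fun t => f (a + t * h)) (h * f' (a + t * h)) t := fun t ht => by
    have hmem : a + t * h ∈ U := hsub ⟨by nlinarith [ht.1], by nlinarith [ht.2]⟩
    exact ((hderiv _ hmem).comp t ((hasDerivAt_mul_const h).const_add a)).congr_deriv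
      (mul_comm _ _)
  have hv' := (hint.comp_add_mul_unitInterval hh.ne').const_mul h
  have hchange : ∫ t in (0 : ℝ)..1, f (a + t * h) = h⁻¹ * ∫ x in a..a + h, f x := by
    simpa [mul_comm] using integral_comp_add_mul f hh.ne' a (a := 0) (b := 1)
  calc _ = (f (a + 0 * h) + 4 * f (a + 1 / 2 * h) + f (a + 1 * h)) / 6
          - ∫ t in (0 : ℝ)..1, f (a + t * h) := by
        rw [hchange]; ring_nf
    _ = ∫ t in (0 : ℝ)..1, simpsonKernel t * (h * f' (a + t * h)) :=
        (integral_simpsonKernel_mul_deriv hv hv').symm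
    _ = _ := by
        rw [← intervalIntegral.integral_const_mul]
        exact integral_congr fun t _ => by rw [simpsonKernel]; ring

/-- **Simpson kernel identity for `c`-convex domains (Lemma 3.1).** For a real
constant `c > 0` (playing the role of `e^{iφ}`) with `a < a + c * (b - a)`,
and `f` positive and differentiable on an open set containing
`[a, a + c * (b - a)]` with derivative `f'` integrable there, the Simpson
quadrature error on `[a, a + c * (b - a)]` equals
`c * (b - a) * ∫ t in 0..1, p t * f' (a + t * c * (b - a))` where
`p t = t - 1/6` on `[0, 1/2)` and `p t = t - 5/6` on `[1/2, 1]`. -/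
theorem simpson_kernel_identity_phi (a b c : ℝ) (hc : 0 < c)
    (hab : a < a + c * (b - a))
    (U : Set ℝ) (hU : IsOpen U) (hsub : Set.Icc a (a + c * (b - a)) ⊆ U)
    (f f' : ℝ → ℝ) (hpos : ∀ x ∈ U, 0 < f x)
    (hderiv : ∀ x ∈ U, HasDerivAt f (f' x) x)
    (hint : IntervalIntegrable f' MeasureTheory.volume a (a + c * (b - a))) :
    (1 / 6) * (f a + 4 * f (a + c * (b - a) / 2) + f (a + c * (b - a))) -
        (1 / (c * (b - a))) * ∫ x in a..(a + c * (b - a)), f x =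
      c * (b - a) *
        ∫ t in (0 : ℝ)..1,
          (if t < 1 / 2 then t - 1 / 6 else t - 5 / 6) * f' (a + t * c * (b - a)) :=
  simpson_kernel_identity_phi_general a b c hab U hsub f f' hderiv hint
end

section
/- Let a, b ∈ ℝ and let c > 0 be a real constant (representing e^{iφ} for 0 ≤ φ ≤ π/2) with a < a + c(b−a). Let f be a positive real-valued function differentiable on an open set containing [a, a + c(b−a)] with f′ integrable on [a, a + c(b−a)], and suppose |f′| is c-convex, i.e. |f′(a + t c (b−a))| ≤ (1−t)|f′(a)| + t|f′(b)| for all t ∈ [0,1]. Then |(1/6)[f(a) + 4 f(a + c(b−a)/2) + f(a + c(b−a))] − (1/(c(b−a))) ∫_a^{a+c(b−a)} f(x) dx| ≤ (5/72) c (b−a) [|f′(a)| + |f′(b)|]. -/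
/-!
Put `L = c (b - a)` and split `[a, a + L]` at its midpoint. Each half is `[x, x + h/2]` with
`(x, h) = (a, L)` or `(a + L, -L)`; for `φ t = f (x + h t)`, integration by parts against the
Peano kernel `t - 1/6` gives `φ (1/2) / 3 + φ 0 / 6 - ∫₀^{1/2} φ = ∫₀^{1/2} (t - 1/6) φ' t dt`.
Convexity bounds `|φ' t|` by `|h| ((1 - t) A + t B)`, where `(A, B) = (|f' a|, |f' b|)` for the
left half and `(|f' b|, |f' a|)` for the right one, and `∫₀^{1/2} |t - 1/6| ((1 - t) A + t B) dt
= (61 A + 29 B) / 1296`. The two halves add up to `90 / 1296 = 5 / 72`.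
-/

open intervalIntegral MeasureTheory Set

theorem integral_sub_mul_affine (s A B x y : ℝ) :
    ∫ t in x..y, (t - s) * ((1 - t) * A + t * B) =
      (-s * A * y + (A + s * (A - B)) * y ^ 2 / 2 + (B - A) * y ^ 3 / 3) -
        (-s * A * x + (A + s * (A - B)) * x ^ 2 / 2 + (B - A) * x ^ 3 / 3) := by
  apply integral_eq_sub_of_hasDerivAt
  · intro t _
    convert ((((hasDerivAt_id t).const_mul (-s * A)).add
      (((hasDerivAt_pow 2 t).const_mul (A + s * (A - B))).div_const 2)).add
      (((hasDerivAt_pow 3 t).const_mul (B - A)).div_const 3)) using 1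
    · rfl
    · norm_num
      ring
  · exact Continuous.intervalIntegrable (by fun_prop) _ _

theorem integral_abs_sub_one_sixth_mul_affine (A B : ℝ) :
    ∫ t in (0 : ℝ)..1 / 2, |t - 1 / 6| * ((1 - t) * A + t * B) = (61 * A + 29 * B) / 1296 := by
  have hcont : Continuous fun t : ℝ => |t - 1 / 6| * ((1 - t) * A + t * B) := by fun_prop
  rw [← integral_add_adjacent_intervals (b := 1 / 6) (hcont.intervalIntegrable _ _)
    (hcont.intervalIntegrable _ _)]
  have hleft : ∫ t in (0 : ℝ)..1 / 6, |t - 1 / 6| * ((1 - t) * A + t * B) =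
      -∫ t in (0 : ℝ)..1 / 6, (t - 1 / 6) * ((1 - t) * A + t * B) := by
    rw [← intervalIntegral.integral_neg]
    refine integral_congr fun t ht => ?_
    rw [uIcc_of_le (by norm_num)] at ht
    simp only [abs_of_nonpos (sub_nonpos.2 ht.2), neg_mul]
  have hright : ∫ t in (1 / 6 : ℝ)..1 / 2, |t - 1 / 6| * ((1 - t) * A + t * B) =
      ∫ t in (1 / 6 : ℝ)..1 / 2, (t - 1 / 6) * ((1 - t) * A + t * B) := by
    refine integral_congr fun t ht => ?_
    rw [uIcc_of_le (by norm_num)] at ht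
    simp only [abs_of_nonneg (sub_nonneg.2 ht.1)]
  rw [hleft, hright, integral_sub_mul_affine, integral_sub_mul_affine]
  ring

theorem integral_sub_one_sixth_mul_deriv {φ φ' : ℝ → ℝ}
    (hφ : ∀ t ∈ uIcc (0 : ℝ) (1 / 2), HasDerivAt φ (φ' t) t)
    (hφ' : IntervalIntegrable φ' volume 0 (1 / 2)) :
    ∫ t in (0 : ℝ)..1 / 2, (t - 1 / 6) * φ' t =
      φ (1 / 2) / 3 + φ 0 / 6 - ∫ t in (0 : ℝ)..1 / 2, φ t := by
  rw [integral_mul_deriv_eq_deriv_mul (fun t _ => (hasDerivAt_id' t).sub_const (1 / 6)) hφ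
    intervalIntegrable_const hφ']
  simp only [one_mul]
  ring

theorem abs_integral_sub_one_sixth_mul_le {g : ℝ → ℝ} {A B : ℝ}
    (hg : IntervalIntegrable g volume 0 (1 / 2))
    (hbound : ∀ t ∈ Icc (0 : ℝ) (1 / 2), |g t| ≤ (1 - t) * A + t * B) :
    |∫ t in (0 : ℝ)..1 / 2, (t - 1 / 6) * g t| ≤ (61 * A + 29 * B) / 1296 := calc
  _ ≤ ∫ t in (0 : ℝ)..1 / 2, |(t - 1 / 6) * g t| := abs_integral_le_integral_abs (by norm_num)
  _ ≤ ∫ t in (0 : ℝ)..1 / 2, |t - 1 / 6| * ((1 - t) * A + t * B) := by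
    refine integral_mono_on (by norm_num)
      (hg.continuousOn_mul (by fun_prop : Continuous fun t : ℝ => t - 1 / 6).continuousOn).abs
      (Continuous.intervalIntegrable (by fun_prop) _ _) fun t ht => ?_
    rw [abs_mul]
    exact mul_le_mul_of_nonneg_left (hbound t ht) (abs_nonneg _)
  _ = (61 * A + 29 * B) / 1296 := integral_abs_sub_one_sixth_mul_affine A B

theorem abs_simpson_half_error_le {f f' : ℝ → ℝ} {x h A B : ℝ} (hh : h ≠ 0)
    (hf : ∀ t ∈ Icc (0 : ℝ) (1 / 2), HasDerivAt f (f' (x + h * t)) (x + h * t))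
    (hf' : IntervalIntegrable f' volume x (x + h / 2))
    (hbound : ∀ t ∈ Icc (0 : ℝ) (1 / 2), |f' (x + h * t)| ≤ (1 - t) * A + t * B) :
    |f (x + h / 2) / 3 + f x / 6 - h⁻¹ * ∫ y in x..x + h / 2, f y| ≤
      |h| * ((61 * A + 29 * B) / 1296) := by
  have hφ : ∀ t ∈ uIcc (0 : ℝ) (1 / 2),
      HasDerivAt (fun t => f (x + h * t)) (h * f' (x + h * t)) t := fun t ht => by
    rw [uIcc_of_le (by norm_num)] at ht
    simpa only [Function.comp_def, mul_one, mul_comm] using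
      (hf t ht).comp t (((hasDerivAt_id' t).const_mul h).const_add x)
  have hφ' : IntervalIntegrable (fun t => h * f' (x + h * t)) volume 0 (1 / 2) := by
    have := (hf'.comp_add_left x).comp_mul_left (c := h)
    simp only [sub_self, zero_div, add_sub_cancel_left, div_div_cancel_left' hh] at this
    simpa only [one_div] using this.const_mul h
  have hsubst : ∫ t in (0 : ℝ)..1 / 2, f (x + h * t) = h⁻¹ * ∫ y in x..x + h / 2, f y := by
    rw [integral_comp_add_mul _ hh, smul_eq_mul, mul_zero, add_zero, mul_one_div]
  have hibp := integral_sub_one_sixth_mul_deriv hφ hφ'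
  simp only [mul_zero, add_zero, mul_one_div] at hibp
  rw [← hsubst, ← hibp]
  calc _ ≤ (61 * (|h| * A) + 29 * (|h| * B)) / 1296 :=
        abs_integral_sub_one_sixth_mul_le hφ' fun t ht => by
          rw [abs_mul]
          linarith [mul_le_mul_of_nonneg_left (hbound t ht) (abs_nonneg h)]
    _ = |h| * ((61 * A + 29 * B) / 1296) := by ring

theorem add_half_mem_uIcc (x h : ℝ) : x + h / 2 ∈ uIcc x (x + h) := by
  rcases le_total 0 h with hh | hh
  · exact mem_uIcc.2 (Or.inl ⟨by linarith, by linarith⟩)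
  · exact mem_uIcc.2 (Or.inr ⟨by linarith, by linarith⟩)

theorem simpson_error_eq_add_half_errors {f : ℝ → ℝ} {a L : ℝ}
    (hf : IntervalIntegrable f volume a (a + L)) :
    1 / 6 * (f a + 4 * f (a + L / 2) + f (a + L)) - 1 / L * ∫ y in a..a + L, f y =
      (f (a + L / 2) / 3 + f a / 6 - L⁻¹ * ∫ y in a..a + L / 2, f y) +
        (f (a + L + -L / 2) / 3 + f (a + L) / 6 - (-L)⁻¹ * ∫ y in a + L..a + L + -L / 2, f y) := by
  have hmid := add_half_mem_uIcc a L
  rw [← integral_add_adjacent_intervals (hf.mono_set (uIcc_subset_uIcc_left hmid))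
    (hf.mono_set (uIcc_subset_uIcc_right hmid)), show a + L + -L / 2 = a + L / 2 by ring,
    integral_symm (a + L / 2) (a + L), inv_neg]
  ring

theorem simpson_type_phi_convex_general (a b c : ℝ)
    (hab : a < a + c * (b - a))
    (U : Set ℝ) (hsub : Set.Icc a (a + c * (b - a)) ⊆ U)
    (f f' : ℝ → ℝ)
    (hderiv : ∀ x ∈ U, HasDerivAt f (f' x) x)
    (hint : IntervalIntegrable f' MeasureTheory.volume a (a + c * (b - a)))
    (hconv : ∀ t ∈ Set.Icc (0 : ℝ) 1,
      |f' (a + t * c * (b - a))| ≤ (1 - t) * |f' a| + t * |f' b|) :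
    |(1 / 6) * (f a + 4 * f (a + c * (b - a) / 2) + f (a + c * (b - a))) -
        (1 / (c * (b - a))) * ∫ x in a..(a + c * (b - a)), f x| ≤
      (5 / 72) * (c * (b - a)) * (|f' a| + |f' b|) := by
  set L := c * (b - a)
  have hL : 0 < L := by linarith
  have hmem : ∀ t ∈ Icc (0 : ℝ) 1, a + L * t ∈ Icc a (a + L) := fun t ht =>
    ⟨by nlinarith [ht.1], by nlinarith [ht.2]⟩
  have hconv' : ∀ t ∈ Icc (0 : ℝ) 1, |f' (a + L * t)| ≤ (1 - t) * |f' a| + t * |f' b| :=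
    fun t ht => by convert hconv t ht using 3; ring
  have hreflect : ∀ t : ℝ, a + L + -L * t = a + L * (1 - t) := fun t => by ring
  have hfint : IntervalIntegrable f volume a (a + L) := ContinuousOn.intervalIntegrable fun y hy =>
    (hderiv y (hsub (by rwa [uIcc_of_le hab.le] at hy))).continuousAt.continuousWithinAt
  have hleft := abs_simpson_half_error_le (x := a) hL.ne'
    (fun t ht => hderiv _ (hsub (hmem t ⟨ht.1, by linarith [ht.2]⟩)))
    (hint.mono_set (uIcc_subset_uIcc_left (add_half_mem_uIcc a L)))
    (fun t ht => hconv' t ⟨ht.1, by linarith [ht.2]⟩)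
  have hright := abs_simpson_half_error_le (x := a + L) (A := |f' b|) (B := |f' a|)
    (neg_ne_zero.2 hL.ne')
    (fun t ht => by
      rw [hreflect]; exact hderiv _ (hsub (hmem _ ⟨by linarith [ht.2], by linarith [ht.1]⟩)))
    (hint.symm.mono_set (uIcc_subset_uIcc_left (by simpa using add_half_mem_uIcc (a + L) (-L))))
    (fun t ht => by
      rw [hreflect]; linarith [hconv' (1 - t) ⟨by linarith [ht.2], by linarith [ht.1]⟩])
  rw [simpson_error_eq_add_half_errors hfint]
  calc _ ≤ _ := (abs_add_le _ _).trans (add_le_add hleft hright)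
    _ = _ := by rw [abs_neg, abs_of_pos hL]; ring

/-- **Simpson type inequality for `c`-convex `|f'|` (Theorem 3.1).** If
`|f'|` is `c`-convex, i.e. `|f' (a + t * c * (b - a))| ≤ (1 - t) * |f' a| + t * |f' b|`
for all `t ∈ [0, 1]`, then the Simpson quadrature error on `[a, a + c * (b - a)]`
is bounded by `(5/72) * c * (b - a) * (|f' a| + |f' b|)`. -/
theorem simpson_type_phi_convex (a b c : ℝ) (hc : 0 < c)
    (hab : a < a + c * (b - a))
    (U : Set ℝ) (hU : IsOpen U) (hsub : Set.Icc a (a + c * (b - a)) ⊆ U)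
    (f f' : ℝ → ℝ) (hpos : ∀ x ∈ U, 0 < f x)
    (hderiv : ∀ x ∈ U, HasDerivAt f (f' x) x)
    (hint : IntervalIntegrable f' MeasureTheory.volume a (a + c * (b - a)))
    (hconv : ∀ t ∈ Set.Icc (0 : ℝ) 1,
      |f' (a + t * c * (b - a))| ≤ (1 - t) * |f' a| + t * |f' b|) :
    |(1 / 6) * (f a + 4 * f (a + c * (b - a) / 2) + f (a + c * (b - a))) -
        (1 / (c * (b - a))) * ∫ x in a..(a + c * (b - a)), f x| ≤
      (5 / 72) * (c * (b - a)) * (|f' a| + |f' b|) :=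
  simpson_type_phi_convex_general a b c hab U hsub f f' hderiv hint hconv
end

section
/- Let a, b ∈ ℝ and let c > 0 be a real constant (representing e^{iφ} for 0 ≤ φ ≤ π/2) with a < a + c(b−a). Let f be a positive real-valued function differentiable on an open set containing [a, a + c(b−a)] with f′ integrable on [a, a + c(b−a)]. Fix q > 1 and set p = q/(q−1). Suppose |f′|^q is c-convex, i.e. |f′(a + t c (b−a))|^q ≤ (1−t)|f′(a)|^q + t|f′(b)|^q for all t ∈ [0,1]. Then |(1/6)[f(a) + 4 f(a + c(b−a)/2) + f(a + c(b−a))] − (1/(c(b−a))) ∫_a^{a+c(b−a)} f(x) dx| ≤ c(b−a) ((1 + 2^{p+1})/(6^{p+1}(p+1)))^{1/p} × { ((3/8)|f′(a)|^q + (1/8)|f′(b)|^q)^{1/q} + ((1/8)|f′(a)|^q + (3/8)|f′(b)|^q)^{1/q} }. -/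
/-!
After the affine change of variables `x = a + h t` with `h = c (b - a)`, integration by parts
against the Peano kernel of Simpson's rule (`t - 1/6` on `[0, 1/2]`, `t - 5/6` on `[1/2, 1]`)
writes the quadrature error as `h` times the two kernel integrals of `f' (a + h t)`. Hölder's
inequality bounds each of them by the `L^p` norm of the kernel, which is
`((1 + 2^(p+1)) / (6^(p+1) (p+1)))^(1/p)` on either half, times the `L^q` norm of
`f' (a + h t)`; by `c`-convexity `|f' (a + h t)|^q ≤ (1 - t) |f' a|^q + t |f' b|^q`, whose
integrals over the two halves are `(3/8) |f' a|^q + (1/8) |f' b|^q` and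
`(1/8) |f' a|^q + (3/8) |f' b|^q`.
-/

open MeasureTheory intervalIntegral Set

theorem IntervalIntegrable.comp_add_mul {f : ℝ → ℝ} {c d u v : ℝ}
    (hf : IntervalIntegrable f volume (d + c * u) (d + c * v)) :
    IntervalIntegrable (fun t => f (d + c * t)) volume u v := by
  rcases eq_or_ne c 0 with rfl | hc
  · simp
  simpa [hc] using (hf.comp_add_left d).comp_mul_left (c := c)

theorem integral_sub_mul_deriv_eq {f f' : ℝ → ℝ} {u v : ℝ} (α : ℝ)
    (hf : ∀ x ∈ uIcc u v, HasDerivAt f (f' x) x) (hf' : IntervalIntegrable f' volume u v) :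
    ∫ x in u..v, (x - α) * f' x = (v - α) * f v - (u - α) * f u - ∫ x in u..v, f x := by
  simpa using integral_mul_deriv_eq_deriv_mul (fun x _ => (hasDerivAt_id x).sub_const α) hf
    intervalIntegrable_const hf'

theorem simpson_error_eq_kernel_integral_unitInterval {g g' : ℝ → ℝ}
    (hg : ∀ t ∈ Icc (0 : ℝ) 1, HasDerivAt g (g' t) t) (hg' : IntervalIntegrable g' volume 0 1) :
    1 / 6 * (g 0 + 4 * g (1 / 2) + g 1) - ∫ t in (0 : ℝ)..1, g t =
      (∫ t in (0 : ℝ)..1 / 2, (t - 1 / 6) * g' t) + ∫ t in (1 / 2 : ℝ)..1, (t - 5 / 6) * g' t := by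
  rw [← uIcc_of_le zero_le_one] at hg
  have hsub₁ : uIcc (0 : ℝ) (1 / 2) ⊆ uIcc 0 1 := uIcc_subset_uIcc_left (by norm_num)
  have hsub₂ : uIcc (1 / 2 : ℝ) 1 ⊆ uIcc 0 1 := uIcc_subset_uIcc_right (by norm_num)
  have hg_int : IntervalIntegrable g volume 0 1 :=
    ContinuousOn.intervalIntegrable fun t ht => (hg t ht).continuousAt.continuousWithinAt
  rw [integral_sub_mul_deriv_eq _ (fun t ht => hg t (hsub₁ ht)) (hg'.mono_set hsub₁),
    integral_sub_mul_deriv_eq _ (fun t ht => hg t (hsub₂ ht)) (hg'.mono_set hsub₂),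
    ← integral_add_adjacent_intervals (hg_int.mono_set hsub₁) (hg_int.mono_set hsub₂)]
  ring

theorem simpson_error_eq_kernel_integral {f f' : ℝ → ℝ} {a h : ℝ} (hh : 0 < h)
    (hf : ∀ x ∈ Icc a (a + h), HasDerivAt f (f' x) x)
    (hf' : IntervalIntegrable f' volume a (a + h)) :
    1 / 6 * (f a + 4 * f (a + h / 2) + f (a + h)) - 1 / h * ∫ x in a..a + h, f x =
      h * ((∫ t in (0 : ℝ)..1 / 2, (t - 1 / 6) * f' (a + h * t)) +
        ∫ t in (1 / 2 : ℝ)..1, (t - 5 / 6) * f' (a + h * t)) := by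
  have hg : ∀ t ∈ Icc (0 : ℝ) 1, HasDerivAt (fun t => f (a + h * t)) (h * f' (a + h * t)) t := by
    intro t ht
    have hmem : a + h * t ∈ Icc a (a + h) := ⟨by nlinarith [ht.1], by nlinarith [ht.2]⟩
    simpa [Function.comp_def, mul_comm] using
      (hf _ hmem).comp t (((hasDerivAt_id t).const_mul h).const_add a)
  have hg' : IntervalIntegrable (fun t => h * f' (a + h * t)) volume 0 1 :=
    (IntervalIntegrable.comp_add_mul (by simpa using hf')).const_mul h
  have key := simpson_error_eq_kernel_integral_unitInterval hg hg'
  simp only [mul_zero, add_zero, mul_one, mul_left_comm _ h, intervalIntegral.integral_const_mul,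
    integral_comp_add_mul f hh.ne'] at key
  rwa [mul_one_div, smul_eq_mul, ← one_div, ← mul_add] at key

theorem memLp_ofReal_of_integrable_abs_rpow {α : Type*} [MeasurableSpace α] {μ : Measure α}
    {g : α → ℝ} {q : ℝ} (hq : 0 < q) (hg : AEStronglyMeasurable g μ)
    (hgq : Integrable (fun x => |g x| ^ q) μ) : MemLp g (ENNReal.ofReal q) μ := by
  rw [← integrable_norm_rpow_iff hg (by simpa using hq) ENNReal.ofReal_ne_top,
    ENNReal.toReal_ofReal hq.le]
  exact hgq

theorem abs_integral_mul_le_of_abs_rpow_le {k g w : ℝ → ℝ} {u v p q : ℝ} (huv : u ≤ v)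
    (hpq : p.HolderConjugate q) (hk : Continuous k)
    (hg : AEStronglyMeasurable g (volume.restrict (Ioc u v)))
    (hw : IntervalIntegrable w volume u v) (hgw : ∀ x ∈ Ioc u v, |g x| ^ q ≤ w x) :
    |∫ x in u..v, k x * g x| ≤
      (∫ x in u..v, |k x| ^ p) ^ (1 / p) * (∫ x in u..v, w x) ^ (1 / q) := by
  have hkp : Continuous fun x => |k x| ^ p := hk.abs.rpow_const fun _ => Or.inr hpq.nonneg
  have hgq : IntegrableOn (fun x => |g x| ^ q) (Ioc u v) :=
    hw.1.mono' (hg.norm.aemeasurable.pow_const q).aestronglyMeasurable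
      ((ae_restrict_iff' measurableSet_Ioc).2 (ae_of_all _ fun x hx => by
        rw [Real.norm_eq_abs, abs_of_nonneg (by positivity)]
        exact hgw x hx))
  have holder := integral_mul_norm_le_Lp_mul_Lq hpq
    (memLp_ofReal_of_integrable_abs_rpow hpq.pos hk.aestronglyMeasurable hkp.integrableOn_Ioc)
    (memLp_ofReal_of_integrable_abs_rpow hpq.symm.pos hg hgq)
  simp only [Real.norm_eq_abs] at holder
  rw [integral_of_le huv, integral_of_le huv, integral_of_le huv]
  calc |∫ x in Ioc u v, k x * g x| ≤ ∫ x in Ioc u v, |k x| * |g x| := by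
        simp_rw [← abs_mul]
        exact MeasureTheory.abs_integral_le_integral_abs
    _ ≤ _ := holder
    _ ≤ _ := by
        refine mul_le_mul_of_nonneg_left (Real.rpow_le_rpow (integral_nonneg fun x => by positivity)
          (setIntegral_mono_on hgq hw.1 measurableSet_Ioc hgw) (one_div_nonneg.2 hpq.symm.nonneg)) ?_
        exact Real.rpow_nonneg (integral_nonneg fun x => by positivity) _

theorem integral_one_sub_mul_add_mul (u v A B : ℝ) :
    ∫ t in u..v, ((1 - t) * A + t * B) = (v - u) * A + (v ^ 2 - u ^ 2) / 2 * (B - A) := by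
  have h : (fun t : ℝ => (1 - t) * A + t * B) = fun t => A + (B - A) * t := by ext; ring
  rw [h, intervalIntegral.integral_add intervalIntegrable_const (intervalIntegrable_id.const_mul _),
    intervalIntegral.integral_const_mul, intervalIntegral.integral_const, integral_id, smul_eq_mul]
  ring

theorem integral_abs_sub_rpow {u v α p : ℝ} (hp : 0 ≤ p) (huα : u ≤ α) (hαv : α ≤ v) :
    ∫ x in u..v, |x - α| ^ p = ((α - u) ^ (p + 1) + (v - α) ^ (p + 1)) / (p + 1) := by
  have hcont : Continuous fun x : ℝ => |x - α| ^ p :=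
    (continuous_abs.comp (continuous_sub_right α)).rpow_const fun _ => Or.inr hp
  rw [← integral_add_adjacent_intervals (hcont.intervalIntegrable u α)
      (hcont.intervalIntegrable α v),
    intervalIntegral.integral_comp_sub_right (fun x => |x| ^ p),
    intervalIntegral.integral_comp_sub_right (fun x => |x| ^ p), sub_self]
  have hleft : ∫ x in u - α..0, |x| ^ p = ∫ x in u - α..0, (-x) ^ p :=
    integral_congr fun x hx => by
      rw [uIcc_of_le (by linarith)] at hx
      rw [abs_of_nonpos hx.2]
  have hright : ∫ x in (0 : ℝ)..v - α, |x| ^ p = ∫ x in (0 : ℝ)..v - α, x ^ p :=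
    integral_congr fun x hx => by
      rw [uIcc_of_le (by linarith)] at hx
      rw [abs_of_nonneg hx.1]
  rw [hleft, hright, intervalIntegral.integral_comp_neg (fun x => x ^ p), neg_zero, neg_sub,
    integral_rpow (Or.inl (by linarith)), integral_rpow (Or.inl (by linarith)),
    Real.zero_rpow (by linarith)]
  ring

theorem one_sixth_rpow_add_one_third_rpow (s : ℝ) :
    (1 / 6 : ℝ) ^ s + (1 / 3) ^ s = (1 + 2 ^ s) / 6 ^ s := by
  rw [show (1 / 3 : ℝ) = 2 / 6 by norm_num, Real.div_rpow zero_le_one (by norm_num),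
    Real.div_rpow zero_le_two (by norm_num), Real.one_rpow, add_div]

theorem integral_abs_sub_one_sixth_rpow {p : ℝ} (hp : 0 ≤ p) :
    ∫ t in (0 : ℝ)..1 / 2, |t - 1 / 6| ^ p = (1 + 2 ^ (p + 1)) / (6 ^ (p + 1) * (p + 1)) := by
  rw [integral_abs_sub_rpow hp (by norm_num) (by norm_num), div_mul_eq_div_div,
    ← one_sixth_rpow_add_one_third_rpow]
  norm_num

theorem integral_abs_sub_five_sixths_rpow {p : ℝ} (hp : 0 ≤ p) :
    ∫ t in (1 / 2 : ℝ)..1, |t - 5 / 6| ^ p = (1 + 2 ^ (p + 1)) / (6 ^ (p + 1) * (p + 1)) := by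
  rw [integral_abs_sub_rpow hp (by norm_num) (by norm_num), div_mul_eq_div_div,
    ← one_sixth_rpow_add_one_third_rpow, add_comm ((1 / 6 : ℝ) ^ (p + 1))]
  norm_num

theorem abs_integral_simpson_kernel_le {φ : ℝ → ℝ} {p q A B : ℝ} (hpq : p.HolderConjugate q)
    (hφ : AEStronglyMeasurable φ (volume.restrict (Ioc 0 1)))
    (hbound : ∀ t ∈ Icc (0 : ℝ) 1, |φ t| ^ q ≤ (1 - t) * A + t * B) :
    |∫ t in (0 : ℝ)..1 / 2, (t - 1 / 6) * φ t| + |∫ t in (1 / 2 : ℝ)..1, (t - 5 / 6) * φ t| ≤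
      ((1 + 2 ^ (p + 1)) / (6 ^ (p + 1) * (p + 1))) ^ (1 / p) *
        ((3 / 8 * A + 1 / 8 * B) ^ (1 / q) + (1 / 8 * A + 3 / 8 * B) ^ (1 / q)) := by
  have hw : Continuous fun t : ℝ => (1 - t) * A + t * B := by fun_prop
  have half₁ := abs_integral_mul_le_of_abs_rpow_le (u := 0) (v := 1 / 2) (by norm_num) hpq
    (continuous_sub_right (1 / 6))
    (hφ.mono_measure (Measure.restrict_mono (Ioc_subset_Ioc_right (by norm_num)) le_rfl))
    (hw.intervalIntegrable _ _) fun t ht => hbound t ⟨ht.1.le, by linarith [ht.2]⟩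
  have half₂ := abs_integral_mul_le_of_abs_rpow_le (u := 1 / 2) (v := 1) (by norm_num) hpq
    (continuous_sub_right (5 / 6))
    (hφ.mono_measure (Measure.restrict_mono (Ioc_subset_Ioc_left (by norm_num)) le_rfl))
    (hw.intervalIntegrable _ _) fun t ht => hbound t ⟨by linarith [ht.1], ht.2⟩
  rw [integral_abs_sub_one_sixth_rpow hpq.nonneg, integral_one_sub_mul_add_mul,
    show ((1 / 2 - 0) * A + ((1 / 2) ^ 2 - 0 ^ 2) / 2 * (B - A) : ℝ) = 3 / 8 * A + 1 / 8 * B by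
      ring] at half₁
  rw [integral_abs_sub_five_sixths_rpow hpq.nonneg, integral_one_sub_mul_add_mul,
    show ((1 - 1 / 2) * A + (1 ^ 2 - (1 / 2) ^ 2) / 2 * (B - A) : ℝ) = 1 / 8 * A + 3 / 8 * B by
      ring] at half₂
  rw [mul_add]
  exact add_le_add half₁ half₂

theorem simpson_type_phi_convex_holder_general (a b c : ℝ)
    (hab : a < a + c * (b - a))
    (U : Set ℝ) (hsub : Set.Icc a (a + c * (b - a)) ⊆ U)
    (f f' : ℝ → ℝ)
    (hderiv : ∀ x ∈ U, HasDerivAt f (f' x) x)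
    (hint : IntervalIntegrable f' MeasureTheory.volume a (a + c * (b - a)))
    (q p : ℝ) (hq : 1 < q) (hp : p = q / (q - 1))
    (hconv : ∀ t ∈ Set.Icc (0 : ℝ) 1,
      |f' (a + t * c * (b - a))| ^ q ≤ (1 - t) * |f' a| ^ q + t * |f' b| ^ q) :
    |(1 / 6) * (f a + 4 * f (a + c * (b - a) / 2) + f (a + c * (b - a))) -
        (1 / (c * (b - a))) * ∫ x in a..(a + c * (b - a)), f x| ≤
      c * (b - a) * ((1 + 2 ^ (p + 1)) / (6 ^ (p + 1) * (p + 1))) ^ (1 / p) *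
        (((3 / 8) * |f' a| ^ q + (1 / 8) * |f' b| ^ q) ^ (1 / q) +
          ((1 / 8) * |f' a| ^ q + (3 / 8) * |f' b| ^ q) ^ (1 / q)) := by
  set h := c * (b - a) with h_def
  have hh : 0 < h := by linarith
  have hpq : p.HolderConjugate q := hp ▸ (Real.HolderConjugate.conjExponent hq).symm
  have hφ : IntervalIntegrable (fun t => f' (a + h * t)) volume 0 1 :=
    IntervalIntegrable.comp_add_mul (by simpa using hint)
  have hbound : ∀ t ∈ Icc (0 : ℝ) 1,
      |f' (a + h * t)| ^ q ≤ (1 - t) * |f' a| ^ q + t * |f' b| ^ q := fun t ht => by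
    rw [show a + h * t = a + t * c * (b - a) by rw [h_def]; ring]
    exact hconv t ht
  rw [simpson_error_eq_kernel_integral hh (fun x hx => hderiv x (hsub hx)) hint, abs_mul,
    abs_of_pos hh]
  exact (mul_le_mul_of_nonneg_left ((abs_add_le _ _).trans
    (abs_integral_simpson_kernel_le hpq hφ.1.aestronglyMeasurable hbound)) hh.le).trans_eq
    (mul_assoc _ _ _).symm

/-- **Simpson type inequality via Hölder (Theorem 3.2).** If `|f'|^q` is
`c`-convex for some `q > 1` and `p = q / (q - 1)`, then the Simpson quadrature
error on `[a, a + c * (b - a)]` is bounded by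
`c * (b - a) * ((1 + 2^(p+1)) / (6^(p+1) * (p+1)))^(1/p) *
  (((3/8) * |f' a|^q + (1/8) * |f' b|^q)^(1/q) + ((1/8) * |f' a|^q + (3/8) * |f' b|^q)^(1/q))`. -/
theorem simpson_type_phi_convex_holder (a b c : ℝ) (hc : 0 < c)
    (hab : a < a + c * (b - a))
    (U : Set ℝ) (hU : IsOpen U) (hsub : Set.Icc a (a + c * (b - a)) ⊆ U)
    (f f' : ℝ → ℝ) (hpos : ∀ x ∈ U, 0 < f x)
    (hderiv : ∀ x ∈ U, HasDerivAt f (f' x) x)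
    (hint : IntervalIntegrable f' MeasureTheory.volume a (a + c * (b - a)))
    (q p : ℝ) (hq : 1 < q) (hp : p = q / (q - 1))
    (hconv : ∀ t ∈ Set.Icc (0 : ℝ) 1,
      |f' (a + t * c * (b - a))| ^ q ≤ (1 - t) * |f' a| ^ q + t * |f' b| ^ q) :
    |(1 / 6) * (f a + 4 * f (a + c * (b - a) / 2) + f (a + c * (b - a))) -
        (1 / (c * (b - a))) * ∫ x in a..(a + c * (b - a)), f x| ≤
      c * (b - a) * ((1 + 2 ^ (p + 1)) / (6 ^ (p + 1) * (p + 1))) ^ (1 / p) *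
        (((3 / 8) * |f' a| ^ q + (1 / 8) * |f' b| ^ q) ^ (1 / q) +
          ((1 / 8) * |f' a| ^ q + (3 / 8) * |f' b| ^ q) ^ (1 / q)) :=
  simpson_type_phi_convex_holder_general a b c hab U hsub f f' hderiv hint q p hq hp hconv
end
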